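/- The bijection between split graphs on n vertices and bipartite posets on n elements (from an S-max KS-partition, with x ≺ y iff x ∈ S, y ∈ K, xy an edge) maps unbalanced split graphs exactly to bipartite posets containing a full support point, and balanced split graphs exactly to bipartite posets with no full support point. -/

import Mathlib

/-!
When `|S| = α(G)`, every vertex of `K` has a neighbour in `S` (else it could join `S`), so the
elements of height 1 are exactly those of `K` and a full support point is a vertex of `S`
adjacent to all of `K`. Such a vertex turns `K` into a clique of size `|K| + 1`, whereas every
KS-partition `(K', S')` with `|S'| = α(G)` has `|K'| = |K|`; so `G` is unbalanced. If there is
no such vertex, a clique meets `S` in at most one vertex and then misses a vertex of `K`, so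
`ω(G) = |K|` and `(K, S)` itself shows that `G` is balanced.
-/

open SimpleGraph
attribute [local instance] Classical.propDecidable

variable {V : Type*} [Fintype V] [DecidableEq V]

/-- A set of vertices is stable (independent) if no two of its elements are adjacent. -/
def IsStableSet (G : SimpleGraph V) (s : Set V) : Prop :=
  s.Pairwise fun a b => ¬ G.Adj a b

/-- The clique number ω(G). -/
noncomputable def omegaNum (G : SimpleGraph V) : ℕ :=
  Finset.univ.sup fun s : Finset V => if G.IsClique (s : Set V) then s.card else 0

/-- The independence number α(G). -/
noncomputable def alphaNum (G : SimpleGraph V) : ℕ :=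
  Finset.univ.sup fun s : Finset V => if IsStableSet G (s : Set V) then s.card else 0

/-- A KS-partition of `G`: a partition of the vertex set into a clique `K` and a stable set `S`. -/
def IsKSPartition (G : SimpleGraph V) (K S : Finset V) : Prop :=
  Disjoint K S ∧ K ∪ S = Finset.univ ∧ G.IsClique (K : Set V) ∧ IsStableSet G (S : Set V)

/-- `G` is a split graph. -/
def IsSplit (G : SimpleGraph V) : Prop := ∃ K S : Finset V, IsKSPartition G K S

/-- A split graph is balanced if it has a KS-partition with `|K| = ω(G)` and `|S| = α(G)`. -/
def IsBalanced (G : SimpleGraph V) : Prop :=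
  ∃ K S : Finset V, IsKSPartition G K S ∧ K.card = omegaNum G ∧ S.card = alphaNum G

/-- `x ≺ y` in the bipartite poset of the KS-partition `(K, S)`. -/
def ksRel (G : SimpleGraph V) (K S : Finset V) (x y : V) : Prop :=
  x ∈ S ∧ y ∈ K ∧ G.Adj x y

def IsFullSupportPoint (r : V → V → Prop) (x : V) : Prop :=
  (∀ u, ¬ r u x) ∧ ∀ y, (∃ u, r u y) → r x y

variable {G : SimpleGraph V}

lemma card_le_alphaNum {s : Finset V} (hs : IsStableSet G (s : Set V)) : s.card ≤ alphaNum G := by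
  simpa [alphaNum, hs] using Finset.le_sup (f := fun s : Finset V =>
    if IsStableSet G (s : Set V) then s.card else 0) (Finset.mem_univ s)

lemma card_le_omegaNum {s : Finset V} (hs : G.IsClique (s : Set V)) : s.card ≤ omegaNum G := by
  simpa [omegaNum, hs] using Finset.le_sup (f := fun s : Finset V =>
    if G.IsClique (s : Set V) then s.card else 0) (Finset.mem_univ s)

lemma omegaNum_le {m : ℕ} (h : ∀ s : Finset V, G.IsClique (s : Set V) → s.card ≤ m) :
    omegaNum G ≤ m :=
  Finset.sup_le fun s _ => by split_ifs with hs <;> simp [h s, hs]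

namespace IsKSPartition

variable {K S : Finset V}

lemma mem_or_mem (h : IsKSPartition G K S) (x : V) : x ∈ K ∨ x ∈ S :=
  Finset.mem_union.mp (h.2.1 ▸ Finset.mem_univ x)

lemma notMem_left_of_mem_right (h : IsKSPartition G K S) {x : V} (hx : x ∈ S) : x ∉ K :=
  Finset.disjoint_right.mp h.1 hx

lemma card_add_card (h : IsKSPartition G K S) : K.card + S.card = Fintype.card V := by
  rw [← Finset.card_union_of_disjoint h.1, h.2.1, Finset.card_univ]

lemma exists_adj_of_card_eq_alphaNum (h : IsKSPartition G K S) (hS : S.card = alphaNum G)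
    {y : V} (hy : y ∈ K) : ∃ u ∈ S, G.Adj u y := by
  by_contra! hno
  have hyS : y ∉ S := Finset.disjoint_left.mp h.1 hy
  have hstable : IsStableSet G ((insert y S : Finset V) : Set V) := by
    rw [Finset.coe_insert]
    exact h.2.2.2.insert_of_notMem hyS fun b hb => ⟨fun hyb => hno b hb hyb.symm, hno b hb⟩
  have := card_le_alphaNum hstable
  rw [Finset.card_insert_of_notMem hyS, hS] at this
  omega

/-- A clique meets `S` in at most one vertex `x`; if `x` misses some `y ∈ K`, the clique lies
in `insert x K` minus `y`. -/
lemma card_le_of_isClique (h : IsKSPartition G K S) (hK : ∀ x ∈ S, ∃ y ∈ K, ¬ G.Adj x y)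
    {s : Finset V} (hs : G.IsClique (s : Set V)) : s.card ≤ K.card := by
  by_cases hsS : ∃ x ∈ s, x ∈ S
  · obtain ⟨x, hxs, hxS⟩ := hsS
    obtain ⟨y, hyK, hxy⟩ := hK x hxS
    have hxK := h.notMem_left_of_mem_right hxS
    have hsub : s ⊆ (insert x K).erase y := by
      intro a has
      have hay : a ≠ y := by
        rintro rfl
        exact hxy (hs hxs has fun hxa => hxK (hxa ▸ hyK))
      refine Finset.mem_erase.mpr ⟨hay, ?_⟩
      rcases h.mem_or_mem a with haK | haS
      · exact Finset.mem_insert_of_mem haK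
      · obtain rfl : a = x := by_contra fun hax => h.2.2.2 haS hxS hax (hs has hxs hax)
        exact Finset.mem_insert_self a K
    calc s.card ≤ ((insert x K).erase y).card := Finset.card_le_card hsub
      _ = K.card := by
        rw [Finset.card_erase_of_mem (Finset.mem_insert_of_mem hyK),
          Finset.card_insert_of_notMem hxK, Nat.add_sub_cancel]
  · push Not at hsS
    exact Finset.card_le_card fun a ha => (h.mem_or_mem a).resolve_right (hsS a ha)

lemma isBalanced_iff (h : IsKSPartition G K S) (hS : S.card = alphaNum G) :
    IsBalanced G ↔ ∀ x ∈ S, ∃ y ∈ K, ¬ G.Adj x y := by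
  constructor
  · rintro ⟨K', S', h', hK', hS'⟩ x hxS
    by_contra! hx
    have hxK := h.notMem_left_of_mem_right hxS
    have hcl : G.IsClique ((insert x K : Finset V) : Set V) := by
      rw [Finset.coe_insert, isClique_insert_of_notMem hxK]
      exact ⟨h.2.2.1, hx⟩
    have hω := card_le_omegaNum hcl
    rw [Finset.card_insert_of_notMem hxK] at hω
    have := h.card_add_card
    have := h'.card_add_card
    omega
  · intro hK
    exact ⟨K, S, h, le_antisymm (card_le_omegaNum h.2.2.1)
      (omegaNum_le fun s hs => h.card_le_of_isClique hK hs), hS⟩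

lemma exists_ksRel_iff (h : IsKSPartition G K S) (hS : S.card = alphaNum G) (y : V) :
    (∃ u, ksRel G K S u y) ↔ y ∈ K :=
  ⟨fun ⟨_, _, hy, _⟩ => hy, fun hy =>
    let ⟨u, huS, hu⟩ := h.exists_adj_of_card_eq_alphaNum hS hy
    ⟨u, huS, hy, hu⟩⟩

lemma isFullSupportPoint_iff (h : IsKSPartition G K S) (hS : S.card = alphaNum G) (x : V) :
    IsFullSupportPoint (ksRel G K S) x ↔ x ∈ S ∧ ∀ y ∈ K, G.Adj x y := by
  simp only [IsFullSupportPoint, ← not_exists, h.exists_ksRel_iff hS]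
  constructor
  · rintro ⟨hxK, hx⟩
    exact ⟨(h.mem_or_mem x).resolve_left hxK, fun y hy => (hx y hy).2.2⟩
  · rintro ⟨hxS, hx⟩
    exact ⟨h.notMem_left_of_mem_right hxS, fun y hy => ⟨hxS, hy, hx y hy⟩⟩

end IsKSPartition

/-- Under the bijection from split graphs to bipartite posets (from an S-max
KS-partition, with `x ≺ y` iff `x ∈ S`, `y ∈ K`, `xy` an edge), a split graph is
unbalanced iff the resulting poset has a full support point (a height-0 element
comparable to every height-1 element), and balanced iff it has none. -/
theorem balance_correspondence_poset (G : SimpleGraph V) (K S : Finset V)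
    (h : IsKSPartition G K S) (hS : S.card = alphaNum G) :
    let r : V → V → Prop := fun x y => x ∈ S ∧ y ∈ K ∧ G.Adj x y
    (¬ IsBalanced G ↔ ∃ x : V, (∀ u, ¬ r u x) ∧ ∀ y, (∃ u, r u y) → r x y) ∧
    (IsBalanced G ↔ ¬ ∃ x : V, (∀ u, ¬ r u x) ∧ ∀ y, (∃ u, r u y) → r x y) := by
  show (¬ IsBalanced G ↔ ∃ x, IsFullSupportPoint (ksRel G K S) x) ∧
    (IsBalanced G ↔ ¬ ∃ x, IsFullSupportPoint (ksRel G K S) x)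
  have hfull : (∃ x, IsFullSupportPoint (ksRel G K S) x) ↔ ∃ x ∈ S, ∀ y ∈ K, G.Adj x y := by
    simp only [h.isFullSupportPoint_iff hS]
  have hbal : IsBalanced G ↔ ¬ ∃ x, IsFullSupportPoint (ksRel G K S) x := by
    rw [h.isBalanced_iff hS, hfull]
    push Not
    rfl
  exact ⟨not_iff_comm.mp hbal.symm, hbal⟩
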